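/- (Recovery sequence for the rescaled dissipation distance.) Let R and D be as in the dissipation assumptions. For all deviatoric matrices z, ẑ ∈ ℝ^{d×d}_dev, setting ẑ_ε := (exp(ε(ẑ−z))(I+εz) − I)/ε, one has ẑ_ε → ẑ as ε → 0 and limsup_{ε→0} ε⁻¹D(I+εz, I+εẑ_ε) ≤ R(ẑ−z). Consequently D_ε Γ-converges to D₀ on ℝ^{d×d}×ℝ^{d×d}, where D_ε(z₁,z₂) := ε⁻¹D(I+εz₁,I+εz₂) and D₀(z₁,z₂) := R(z₂−z₁). -/

import Mathlib

open MeasureTheory Matrix Filter Set Metric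
open scoped BigOperators ENNReal NNReal Topology RealInnerProductSpace

noncomputable section

namespace LinPlast

/-- Euclidean space `ℝ^d`. -/
abbrev E (d : ℕ) := EuclideanSpace ℝ (Fin d)

/-- Square `d×d` real matrices. -/
abbrev Mat (d : ℕ) := Matrix (Fin d) (Fin d) ℝ

attribute [local instance] Matrix.frobeniusNormedAddCommGroup Matrix.frobeniusNormedSpace

variable {d : ℕ}

/-- Frobenius inner product `A : B`. -/
def matInner (A B : Mat d) : ℝ := ∑ i, ∑ j, A i j * B i j

/-- Fourth order tensors. -/
abbrev Tens (d : ℕ) := Fin d → Fin d → Fin d → Fin d → ℝ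

/-- Application of a 4-tensor to a matrix, `(𝕋A)_{ij} = ∑_{kl} 𝕋_{ijkl} A_{kl}`. -/
def tApp (T : Tens d) (A : Mat d) : Mat d := Matrix.of fun i j => ∑ k, ∑ l, T i j k l * A k l

/-- The quadratic form `|A|²_𝕋 := ½ A : 𝕋A`. -/
def qForm (T : Tens d) (A : Mat d) : ℝ := (1 / 2) * matInner A (tApp T A)

/-- A symmetric (`𝕋_{ijkl} = 𝕋_{klij}`) positive semidefinite 4-tensor. -/
structure IsGoodTens (T : Tens d) : Prop where
  symm : ∀ i j k l, T i j k l = T k l i j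
  psd : ∀ A : Mat d, 0 ≤ matInner A (tApp T A)

/-- `SL(d)`: matrices of determinant one.-/
def SLg (d : ℕ) : Set (Mat d) := {P | P.det = 1}

/-- `SO(d)`: rotations. -/
def SOg (d : ℕ) : Set (Mat d) := {R | R.det = 1 ∧ Rᵀ * R = 1 ∧ R * Rᵀ = 1}

/-- `GL₊(d)`: matrices of positive determinant. -/
def GLp (d : ℕ) : Set (Mat d) := {F | 0 < F.det}

/-- Deviatoric (symmetric and trace-free) matrices. -/
def Dev (d : ℕ) : Set (Mat d) := {A | Aᵀ = A ∧ A.trace = 0}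

/-- Symmetric part of a matrix. -/
def msym (A : Mat d) : Mat d := (2⁻¹ : ℝ) • (A + Aᵀ)

/-- Matrix exponential. -/
def mexp (A : Mat d) : Mat d := NormedSpace.exp A

/-- The dissipation-potential assumptions: `R^dev` is nonnegative, convex, positively
1-homogeneous and comparable to the norm on the deviatoric matrices. -/
structure DissAss (d : ℕ) (Rdev : Mat d → ℝ) (c₄ c₅ : ℝ) : Prop where
  c4pos : 0 < c₄
  c5pos : 0 < c₅
  nonneg : ∀ P ∈ Dev d, 0 ≤ Rdev P
  convexOn : ConvexOn ℝ (Dev d) Rdev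
  hom : ∀ a : ℝ, 0 ≤ a → ∀ P ∈ Dev d, Rdev (a • P) = a * Rdev P
  lb : ∀ P ∈ Dev d, c₄ * ‖P‖ ≤ Rdev P
  ub : ∀ P ∈ Dev d, Rdev P ≤ c₅ * ‖P‖

-- The extended dissipation potential `R`, equal to `R^dev` on deviatoric matrices and
-- `∞` otherwise (with values in `[0,∞]`).
open scoped Classical in
def Rext (Rdev : Mat d → ℝ) (P : Mat d) : ℝ≥0∞ :=
  if P ∈ Dev d then ENNReal.ofReal (Rdev P) else ⊤

/-- The dissipation distance `D(I,P̂)`: infimum of `∫₀¹ R(Ṗ P⁻¹) dt` over `C¹` paths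
from `I` to `P̂`. -/
def DistI (Rdev : Mat d → ℝ) (Phat : Mat d) : ℝ≥0∞ :=
  ⨅ (P : ℝ → Mat d) (_ : ContDiff ℝ 1 P) (_ : P 0 = 1) (_ : P 1 = Phat),
    ∫⁻ t in Set.Icc (0 : ℝ) 1, Rext Rdev (deriv P t * (P t)⁻¹)

/-- The dissipation distance `D(P,P̂) = D(I, P̂ P⁻¹)` (equal to `∞` if `P` is not
invertible, since then `P⁻¹ = 0` and no admissible finite-cost path exists). -/
def DistD (Rdev : Mat d → ℝ) (P Phat : Mat d) : ℝ≥0∞ := DistI Rdev (Phat * P⁻¹)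

/-- The gradient `∇u(x)` of a vector field, as a matrix: `(∇u)_{ij} = ∂_j u_i`. -/
def grad (u : E d → E d) (x : E d) : Mat d :=
  Matrix.of fun i j => fderiv ℝ u x (EuclideanSpace.single j 1) i

/-- Membership in `H¹(Ω;ℝ^d)`: differentiable on `Ω`, with the function and its gradient
square integrable on `Ω`. -/
structure MemH1 (Ω : Set (E d)) (u : E d → E d) : Prop where
  diff : ∀ x ∈ Ω, DifferentiableAt ℝ u x
  l2 : MemLp u 2 (volume.restrict Ω)
  gradl2 : MemLp (grad u) 2 (volume.restrict Ω)

/-- The space `U = {u ∈ H¹(Ω;ℝ^d) : u = 0 on Γ}`. -/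
def memU (Ω Γ : Set (E d)) (u : E d → E d) : Prop :=
  MemH1 Ω u ∧ ∀ x ∈ Γ, u x = 0

/-- The space `Z = L²(Ω;ℝ^{d×d})`. -/
def memZ (Ω : Set (E d)) (z : E d → Mat d) : Prop :=
  MemLp z 2 (volume.restrict Ω)

/-- Membership in the state space `Q = U × Z`. -/
def memQ (Ω Γ : Set (E d)) (u : E d → E d) (z : E d → Mat d) : Prop :=
  memU Ω Γ u ∧ memZ Ω z

/-- Weak convergence in `L²(Ω;ℝ^{d×d})`. -/
def WeakL2Mat (Ω : Set (E d)) (z : ℕ → E d → Mat d) (z₀ : E d → Mat d) : Prop :=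
  ∀ g : E d → Mat d, MemLp g 2 (volume.restrict Ω) →
    Tendsto (fun n => ∫ x in Ω, matInner (z n x) (g x)) atTop
      (𝓝 (∫ x in Ω, matInner (z₀ x) (g x)))

/-- Weak convergence in `L²(Ω;ℝ^d)`. -/
def WeakL2Vec (Ω : Set (E d)) (u : ℕ → E d → E d) (u₀ : E d → E d) : Prop :=
  ∀ g : E d → E d, MemLp g 2 (volume.restrict Ω) →
    Tendsto (fun n => ∫ x in Ω, ⟪u n x, g x⟫) atTop (𝓝 (∫ x in Ω, ⟪u₀ x, g x⟫))

/-- Weak convergence in `H¹(Ω;ℝ^d)`. -/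
def WeakH1 (Ω : Set (E d)) (u : ℕ → E d → E d) (u₀ : E d → E d) : Prop :=
  WeakL2Vec Ω u u₀ ∧ WeakL2Mat Ω (fun n => grad (u n)) (grad u₀)

/-- Weak convergence in `Q = U × Z`. -/
def WeakQ (Ω : Set (E d)) (u : ℕ → E d → E d) (z : ℕ → E d → Mat d)
    (u₀ : E d → E d) (z₀ : E d → Mat d) : Prop :=
  WeakH1 Ω u u₀ ∧ WeakL2Mat Ω z z₀

/-- A bounded open connected set with Lipschitz boundary: near every boundary point,
after choosing a unit direction `v`, the set is the open hypograph of a Lipschitz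
function over the hyperplane orthogonal to `v`. -/
structure IsLipschitzDomain (Ω : Set (E d)) : Prop where
  open' : IsOpen Ω
  bounded : Bornology.IsBounded Ω
  connected : IsConnected Ω
  lipBoundary : ∀ x ∈ frontier Ω, ∃ r > (0 : ℝ), ∃ v : E d, ‖v‖ = 1 ∧
    ∃ L : ℝ≥0, ∃ φ : E d → ℝ, LipschitzWith L φ ∧
      ∀ y ∈ Metric.ball x r, (y ∈ Ω ↔ ⟪y, v⟫ < φ (y - ⟪y, v⟫ • v))

/-- The Dirichlet boundary part `Γ`: a relatively open subset of `∂Ω` with positive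
`(d-1)`-dimensional Hausdorff measure. -/
structure IsDirichletPart (Ω Γ : Set (E d)) : Prop where
  sub : Γ ⊆ frontier Ω
  relOpen : ∃ V : Set (E d), IsOpen V ∧ Γ = V ∩ frontier Ω
  posMeas : 0 < μH[(d : ℝ) - 1] Γ

/-- The matrix of first derivatives `∂_F W(F)` of a real function of a matrix. -/
def matGrad (W : Mat d → ℝ) (F : Mat d) : Mat d :=
  Matrix.of fun i j => fderiv ℝ W F (Matrix.single i j 1)

/-- The assumptions on the elastic energy density `W_el : ℝ^{d×d} → [0,∞]`:
finite and `C¹` on `GL₊(d)` and `≡ ∞` outside; frame indifference; nondegeneracy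
`W_el(F) ≥ c₁ dist²(F,SO(d))`; control of the Mandel tensor `Fᵀ ∂_F W_el(F)`;
and quadratic expansion `|·|²_ℂ` around the identity. -/
structure ElAss (d : ℕ) (Wel : Mat d → ℝ≥0∞) (c₁ c₂ c₃ : ℝ) (Cten : Tens d) : Prop where
  c1pos : 0 < c₁
  c2pos : 0 < c₂
  finiteOn : ∀ F ∈ GLp d, Wel F ≠ ⊤
  eqTopOff : ∀ F ∉ GLp d, Wel F = ⊤
  smooth : ContDiffOn ℝ 1 (fun F => (Wel F).toReal) (GLp d)
  frame : ∀ R ∈ SOg d, ∀ F ∈ GLp d, Wel (R * F) = Wel F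
  lowerBound : ∀ F ∈ GLp d,
    ENNReal.ofReal (c₁ * (Metric.infDist F (SOg d)) ^ 2) ≤ Wel F
  mandel : ∀ F ∈ GLp d,
    ‖Fᵀ * matGrad (fun G => (Wel G).toReal) F‖ ≤ c₂ * ((Wel F).toReal + c₃)
  tens : IsGoodTens Cten
  quadExp : ∀ δ > (0 : ℝ), ∃ cδ > (0 : ℝ), ∀ A : Mat d, ‖A‖ < cδ →
    Wel (1 + A) ≠ ⊤ ∧ |(Wel (1 + A)).toReal - qForm Cten A| ≤ δ * qForm Cten A

/-- The assumptions on the hardening energy density `W_h`: it coincides with a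
locally Lipschitz, quadratically expandable `W̃_h` on a compact `K ⊆ SL(d)` containing
a relative neighborhood of `I`, is `≡ ∞` outside `K`, and is coercive. -/
structure HardAss (d : ℕ) (Wh : Mat d → ℝ≥0∞) (Wth : Mat d → ℝ) (K : Set (Mat d))
    (c₃ : ℝ) (Hten : Tens d) : Prop where
  c3pos : 0 < c₃
  eqOn : ∀ P ∈ K, Wh P = ENNReal.ofReal (Wth P)
  eqTopOff : ∀ P ∉ K, Wh P = ⊤
  nonneg : ∀ P ∈ K, 0 ≤ Wth P
  compact : IsCompact K
  subSL : K ⊆ SLg d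
  nbhdI : ∃ ρ > (0 : ℝ), {P ∈ SLg d | ‖P - 1‖ < ρ} ⊆ K
  locLip : LocallyLipschitz Wth
  tens : IsGoodTens Hten
  quadExp : ∀ δ > (0 : ℝ), ∃ cδ > (0 : ℝ), ∀ A : Mat d, ‖A‖ < cδ →
    |Wth (1 + A) - qForm Hten A| ≤ δ * qForm Hten A
  coercive : ∀ A : Mat d, ENNReal.ofReal (c₃ * ‖A‖ ^ 2) ≤ Wh (1 + A)

/-- The rescaled finite-plasticity stored energy
`W_ε(u,z) = ε⁻² ∫_Ω W_el((I+ε∇u)(I+εz)⁻¹) dx + ε⁻² ∫_Ω W_h(I+εz) dx`. -/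
def Weps (Ω : Set (E d)) (Wel Wh : Mat d → ℝ≥0∞) (ε : ℝ)
    (u : E d → E d) (z : E d → Mat d) : ℝ≥0∞ :=
  ENNReal.ofReal (ε⁻¹) ^ 2 *
    ((∫⁻ x in Ω, Wel ((1 + ε • grad u x) * (1 + ε • z x)⁻¹)) +
      ∫⁻ x in Ω, Wh (1 + ε • z x))

/-- The linearized stored energy `W₀(u,z) = ∫_Ω |∇u^sym − z^sym|²_ℂ + ∫_Ω |z|²_ℍ`. -/
def W0 (Ω : Set (E d)) (Cten Hten : Tens d)
    (u : E d → E d) (z : E d → Mat d) : ℝ≥0∞ :=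
  (∫⁻ x in Ω, ENNReal.ofReal (qForm Cten (msym (grad u x) - msym (z x)))) +
    ∫⁻ x in Ω, ENNReal.ofReal (qForm Hten (z x))

/-- A generalized loading `ℓ ∈ W^{1,1}(0,T;U')`, described by its values and its time
derivative `ℓ'`: both are linear in `u`, `ℓ` is the integral of `ℓ'`, and `ℓ(t)`, `ℓ'(t)`
are bounded by `g(t)` times the `H¹(Ω)`-norm, with `g ∈ L¹(0,T)`. -/
structure Loading (Ω : Set (E d)) (T : ℝ) (ℓ ℓ' : ℝ → (E d → E d) → ℝ) : Prop where
  lin : ∀ t ∈ Icc (0 : ℝ) T, IsLinearMap ℝ (ℓ t) ∧ IsLinearMap ℝ (ℓ' t)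
  fund : ∀ u : E d → E d, ∀ t ∈ Icc (0 : ℝ) T,
    (IntervalIntegrable (fun s => ℓ' s u) volume 0 t) ∧
    ℓ t u = ℓ 0 u + ∫ s in (0 : ℝ)..t, ℓ' s u
  bound : ∃ g : ℝ → ℝ, IntegrableOn g (Icc (0 : ℝ) T) ∧
    ∀ t ∈ Icc (0 : ℝ) T, ∀ u : E d → E d,
      |ℓ t u| ≤ g t * Real.sqrt ((∫ x in Ω, ‖u x‖ ^ 2) + ∫ x in Ω, ‖grad u x‖ ^ 2) ∧
      |ℓ' t u| ≤ g t * Real.sqrt ((∫ x in Ω, ‖u x‖ ^ 2) + ∫ x in Ω, ‖grad u x‖ ^ 2)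

/-- Total energy `E_ε(t,u,z) = W_ε(u,z) − ⟨ℓ(t),u⟩`, with values in `(-∞,∞]`. -/
def Eeps (Ω : Set (E d)) (Wel Wh : Mat d → ℝ≥0∞) (ℓ : ℝ → (E d → E d) → ℝ)
    (ε t : ℝ) (u : E d → E d) (z : E d → Mat d) : EReal :=
  (Weps Ω Wel Wh ε u z : EReal) - ((ℓ t u : ℝ) : EReal)

/-- Linearized total energy `E₀(t,u,z) = W₀(u,z) − ⟨ℓ(t),u⟩`. -/
def E0 (Ω : Set (E d)) (Cten Hten : Tens d)
    (ℓ : ℝ → (E d → E d) → ℝ) (t : ℝ) (u : E d → E d) (z : E d → Mat d) : EReal :=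
  (W0 Ω Cten Hten u z : EReal) - ((ℓ t u : ℝ) : EReal)

/-- The rescaled dissipation functional `𝒟_ε(z₁,z₂) = ε⁻¹ ∫_Ω D(I+εz₁, I+εz₂) dx`. -/
def Deps (Ω : Set (E d)) (Rdev : Mat d → ℝ) (ε : ℝ)
    (z₁ z₂ : E d → Mat d) : ℝ≥0∞ :=
  ENNReal.ofReal (ε⁻¹) * ∫⁻ x in Ω, DistD Rdev (1 + ε • z₁ x) (1 + ε • z₂ x)

/-- The linearized dissipation functional `𝒟₀(z₁,z₂) = ∫_Ω R(z₂ − z₁) dx`. -/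
def D0 (Ω : Set (E d)) (Rdev : Mat d → ℝ) (z₁ z₂ : E d → Mat d) : ℝ≥0∞ :=
  ∫⁻ x in Ω, Rext Rdev (z₂ x - z₁ x)

/-- The total dissipation `Diss_𝒟(z;[0,t])`: supremum over all partitions
`0 = τ₀ ≤ … ≤ τ_N = t` of `∑ 𝒟(z(τ_{i-1}), z(τ_i))`. -/
def DissOn (Dd : (E d → Mat d) → (E d → Mat d) → ℝ≥0∞)
    (z : ℝ → E d → Mat d) (t : ℝ) : ℝ≥0∞ :=
  ⨆ (N : ℕ) (τ : Fin (N + 1) → ℝ) (_ : Monotone τ) (_ : τ 0 = 0)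
    (_ : τ (Fin.last N) = t),
      ∑ i : Fin N, Dd (z (τ i.castSucc)) (z (τ i.succ))

/-- Stability of a state `(u,z)` at a given time for the energy `Ee` and dissipation `Dd`. -/
def Stable (Qmem : (E d → E d) → (E d → Mat d) → Prop)
    (Ee : (E d → E d) → (E d → Mat d) → EReal)
    (Dd : (E d → Mat d) → (E d → Mat d) → ℝ≥0∞)
    (u : E d → E d) (z : E d → Mat d) : Prop :=
  Ee u z < ⊤ ∧ ∀ uh zh, Qmem uh zh → Ee u z ≤ Ee uh zh + (Dd z zh : EReal)

/-- An energetic solution on `[0,T]` of the rate-independent system given by the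
(time-dependent) energy `Ee`, dissipation `Dd`, power `ℓ'` and initial datum `(u0,z0)`:
global stability and energy balance hold at every time. -/
structure IsEnergeticSol (Qmem : (E d → E d) → (E d → Mat d) → Prop) (T : ℝ)
    (Ee : ℝ → (E d → E d) → (E d → Mat d) → EReal)
    (Dd : (E d → Mat d) → (E d → Mat d) → ℝ≥0∞)
    (ℓ' : ℝ → (E d → E d) → ℝ) (u0 : E d → E d) (z0 : E d → Mat d)
    (u : ℝ → E d → E d) (z : ℝ → E d → Mat d) : Prop where
  init_u : u 0 = u0
  init_z : z 0 = z0
  mem : ∀ t ∈ Icc (0 : ℝ) T, Qmem (u t) (z t)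
  power_int : IntegrableOn (fun s => ℓ' s (u s)) (Icc (0 : ℝ) T)
  stable : ∀ t ∈ Icc (0 : ℝ) T, Stable Qmem (Ee t) Dd (u t) (z t)
  balance : ∀ t ∈ Icc (0 : ℝ) T,
    Ee t (u t) (z t) + (DissOn Dd z t : EReal)
      = Ee 0 u0 z0 - ((∫ s in (0 : ℝ)..t, ℓ' s (u s) : ℝ) : EReal)


/-!
Upper bound: for deviatoric `A` the path `t ↦ exp(t ε A)` has constant velocity `ε A`, so
`D(I + εz, exp(εA)(I + εz)) = D(I, exp(εA)) ≤ ε R(A)`. With `A = ẑ - z` this is the recovery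
sequence, and `ẑ_ε → ẑ` because `ẑ_ε` is a difference quotient of `u ↦ exp(uA)(I + uz)` at `0`.

Lower bound: the velocity `V = Ṗ P⁻¹` of a `C¹` path `P` from `I` of cost `c` has total norm at
most `c / c₄`, and a continuity argument keeps `P` within `(‖I‖ + 1) c / c₄` of `I`. Hence `P`
stays invertible, `V` is continuous and deviatoric, and `ζ = ∫₀¹ V` satisfies `R(ζ) ≤ c` by
Jensen and `‖P(1) - I - ζ‖ = ‖∫₀¹ V (P - I)‖ = O(c²)`. For `P̂ = (I + εẑ)(I + εz)⁻¹` and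
`c = ε b` the deviatoric matrices `ζ / ε` converge to `ẑ - z`, so `R(ẑ - z) ≤ b` whenever
`liminf ε⁻¹ D(I + εz, I + εẑ) < b`.
-/

lemma le_on_Icc_of_bootstrap {g : ℝ → ℝ} {a b K M : ℝ} (hg : ContinuousOn g (Icc a b))
    (hKM : K < M) (ha : g a ≤ M)
    (hstep : ∀ s ∈ Icc a b, (∀ u ∈ Icc a s, g u ≤ M) → g s ≤ K) :
    ∀ s ∈ Icc a b, g s ≤ K := by
  set S := Icc a b ∩ g ⁻¹' Ici M
  have hbelow : ∀ s ∈ Icc a b, (∀ u ∈ Icc a s, u ∉ S) → g s ≤ K := fun s hs hS =>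
    hstep s hs fun u hu => not_lt.1 fun hMu => hS u hu ⟨⟨hu.1, hu.2.trans hs.2⟩, hMu.le⟩
  rcases S.eq_empty_or_nonempty with hS | hS
  · exact fun s hs => hbelow s hs fun u _ hu => hS.subset hu
  -- otherwise the first time `T` at which `g` reaches `M` leads to a contradiction
  exfalso
  have hSb : BddBelow S := ⟨a, fun s hs => hs.1.1⟩
  have hT : sInf S ∈ S :=
    (hg.preimage_isClosed_of_isClosed isClosed_Icc isClosed_Ici).csInf_mem hS hSb
  set T := sInf S
  have hMT : M ≤ g T := hT.2
  have hbefore : ∀ s ∈ Ico a T, g s ≤ K := fun s hs =>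
    hbelow s ⟨hs.1, hs.2.le.trans hT.1.2⟩ fun u hu huS =>
      (csInf_le hSb huS).not_gt (hu.2.trans_lt hs.2)
  rcases hT.1.1.eq_or_lt with haT | haT
  · have hga : g a ≤ K := hstep a (left_mem_Icc.2 (haT ▸ hT.1.2)) fun u hu => by
      rwa [le_antisymm hu.2 hu.1]
    linarith [haT ▸ hMT]
  · have hTK : g T ≤ K := by
      refine le_on_closure hbefore (hg.mono ?_) continuousOn_const ?_
      · rw [closure_Ico haT.ne]
        exact Icc_subset_Icc_right hT.1.2
      · rw [closure_Ico haT.ne]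
        exact right_mem_Icc.2 haT.le
    linarith

lemma norm_integral_le_of_norm_le_mul {α E F : Type*} [MeasurableSpace α] {μ : Measure α}
    [NormedAddCommGroup E] [NormedSpace ℝ E] [NormedAddCommGroup F] {g : α → E} {h : α → F}
    {C δ : ℝ} (hC : 0 ≤ C) (hδ : 0 ≤ δ) (hgh : ∀ᵐ x ∂μ, ‖g x‖ ≤ C * ‖h x‖)
    (hh : ∫⁻ x, ‖h x‖ₑ ∂μ ≤ ENNReal.ofReal δ) :
    ‖∫ x, g x ∂μ‖ ≤ C * δ := by
  have hlin : ∫⁻ x, ENNReal.ofReal ‖g x‖ ∂μ ≤ ENNReal.ofReal (C * δ) :=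
    calc ∫⁻ x, ENNReal.ofReal ‖g x‖ ∂μ ≤ ∫⁻ x, ENNReal.ofReal C * ‖h x‖ₑ ∂μ :=
          lintegral_mono_ae <| hgh.mono fun x hx => by
            rw [← ofReal_norm, ← ENNReal.ofReal_mul hC]
            exact ENNReal.ofReal_le_ofReal hx
      _ = ENNReal.ofReal C * ∫⁻ x, ‖h x‖ₑ ∂μ := lintegral_const_mul' _ _ ENNReal.ofReal_ne_top
      _ ≤ ENNReal.ofReal (C * δ) := by
          rw [ENNReal.ofReal_mul hC]
          gcongr
  calc ‖∫ x, g x ∂μ‖ ≤ (∫⁻ x, ENNReal.ofReal ‖g x‖ ∂μ).toReal :=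
        norm_integral_le_lintegral_norm g
    _ ≤ C * δ := ENNReal.toReal_le_of_le_ofReal (by positivity) hlin

lemma sub_eq_setIntegral_deriv {E : Type*} [NormedAddCommGroup E] [NormedSpace ℝ E]
    [CompleteSpace E] {P : ℝ → E} (hP : ContDiff ℝ 1 P) {s : ℝ} (hs : 0 ≤ s) :
    P s - P 0 = ∫ t in Icc 0 s, deriv P t := by
  rw [integral_Icc_eq_integral_Ioc, ← intervalIntegral.integral_of_le hs,
    intervalIntegral.integral_deriv_eq_sub (fun t _ => hP.differentiable one_ne_zero t)
      ((hP.continuous_deriv le_rfl).intervalIntegrable _ _)]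

section

open scoped Matrix.Norms.Frobenius

attribute [-instance] instTopologicalSpaceMatrix Matrix.instUniformSpace

lemma smul_mem_dev {A : Mat d} (hA : A ∈ Dev d) (r : ℝ) : r • A ∈ Dev d :=
  ⟨by rw [transpose_smul, hA.1], by rw [trace_smul, hA.2, smul_zero]⟩

lemma sub_mem_dev {A B : Mat d} (hA : A ∈ Dev d) (hB : B ∈ Dev d) : A - B ∈ Dev d :=
  ⟨by rw [transpose_sub, hA.1, hB.1], by rw [trace_sub, hA.2, hB.2, sub_zero]⟩

lemma isClosed_dev : IsClosed (Dev d) :=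
  (isClosed_eq continuous_id.matrix_transpose continuous_id).inter
    (isClosed_eq continuous_id.matrix_trace continuous_const)

variable {Rdev : Mat d → ℝ} {c₄ c₅ : ℝ} {ι : Type*} {l : Filter ι} {ε : ι → ℝ}

lemma Rext_of_mem_dev {A : Mat d} (hA : A ∈ Dev d) : Rext Rdev A = ENNReal.ofReal (Rdev A) := by
  simp [Rext, hA]

lemma Rext_of_notMem_dev {A : Mat d} (hA : A ∉ Dev d) : Rext Rdev A = ⊤ := by
  simp [Rext, hA]

namespace DissAss

lemma map_add_le (hR : DissAss d Rdev c₄ c₅) {A B : Mat d} (hA : A ∈ Dev d) (hB : B ∈ Dev d) :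
    Rdev (A + B) ≤ Rdev A + Rdev B := by
  have h := hR.convexOn.2 (smul_mem_dev hA 2) (smul_mem_dev hB 2)
    (by norm_num : (0 : ℝ) ≤ 2⁻¹) (by norm_num : (0 : ℝ) ≤ 2⁻¹) (by norm_num)
  rwa [smul_smul, smul_smul, inv_mul_cancel₀ two_ne_zero, one_smul, one_smul,
    hR.hom 2 zero_le_two A hA, hR.hom 2 zero_le_two B hB, smul_eq_mul, smul_eq_mul,
    inv_mul_cancel_left₀ two_ne_zero, inv_mul_cancel_left₀ two_ne_zero] at h

lemma sub_le_mul_norm_sub (hR : DissAss d Rdev c₄ c₅) {A B : Mat d} (hA : A ∈ Dev d)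
    (hB : B ∈ Dev d) : Rdev A - Rdev B ≤ c₅ * ‖A - B‖ := by
  have h := hR.map_add_le hB (sub_mem_dev hA hB)
  rw [add_sub_cancel] at h
  linarith [hR.ub _ (sub_mem_dev hA hB)]

lemma continuousOn (hR : DissAss d Rdev c₄ c₅) : ContinuousOn Rdev (Dev d) := by
  refine (LipschitzOnWith.of_dist_le_mul fun A hA B hB => ?_).continuousOn (K := c₅.toNNReal)
  rw [Real.dist_eq, dist_eq_norm, Real.coe_toNNReal _ hR.c5pos.le, abs_sub_le_iff]
  exact ⟨hR.sub_le_mul_norm_sub hA hB, norm_sub_rev A B ▸ hR.sub_le_mul_norm_sub hB hA⟩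

lemma ofReal_mul_enorm_le_Rext (hR : DissAss d Rdev c₄ c₅) (A : Mat d) :
    ENNReal.ofReal c₄ * ‖A‖ₑ ≤ Rext Rdev A := by
  by_cases hA : A ∈ Dev d
  · rw [Rext_of_mem_dev hA, ← ofReal_norm, ← ENNReal.ofReal_mul hR.c4pos.le]
    exact ENNReal.ofReal_le_ofReal (hR.lb A hA)
  · rw [Rext_of_notMem_dev hA]
    exact le_top

end DissAss

lemma isUnit_det_of_norm_sub_one_lt {A : Mat d} (h : ‖A - 1‖ < 1) : IsUnit A.det :=
  (isUnit_iff_isUnit_det A).mp <| by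
    simpa using isUnit_one_sub_of_norm_lt_one (x := 1 - A) (by rwa [norm_sub_rev])

lemma continuousAt_inv_of_isUnit_det {A : Mat d} (hA : IsUnit A.det) :
    ContinuousAt (fun B : Mat d => B⁻¹) A := by
  obtain ⟨u, rfl⟩ := (isUnit_iff_isUnit_det A).mpr hA
  have h : (fun B : Mat d => B⁻¹) = Ring.inverse := funext Matrix.nonsing_inv_eq_ringInverse
  exact h ▸ NormedRing.inverse_continuousAt u

lemma DistI_le_of_path {Phat : Mat d} {P : ℝ → Mat d} (hP : ContDiff ℝ 1 P)
    (h0 : P 0 = 1) (h1 : P 1 = Phat) :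
    DistI Rdev Phat ≤ ∫⁻ t in Icc (0 : ℝ) 1, Rext Rdev (deriv P t * (P t)⁻¹) :=
  (iInf_le _ P).trans <| (iInf_le _ hP).trans <| (iInf_le _ h0).trans <| iInf_le _ h1

lemma exists_path_of_DistI_lt {Phat : Mat d} {X : ℝ≥0∞} (h : DistI Rdev Phat < X) :
    ∃ P : ℝ → Mat d, ContDiff ℝ 1 P ∧ P 0 = 1 ∧ P 1 = Phat ∧
      ∫⁻ t in Icc (0 : ℝ) 1, Rext Rdev (deriv P t * (P t)⁻¹) < X := by
  simp only [DistI, iInf_lt_iff] at h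
  obtain ⟨P, hP, h0, h1, hcost⟩ := h
  exact ⟨P, hP, h0, h1, hcost⟩

lemma deriv_mexp_smul_mul_inv (B : Mat d) (t : ℝ) :
    deriv (fun u : ℝ => mexp (u • B)) t * (mexp (t • B))⁻¹ = B := by
  have hderiv : deriv (fun u : ℝ => mexp (u • B)) t = mexp (t • B) * B :=
    (hasDerivAt_exp_smul_const B t).deriv
  have hcomm : mexp (t • B) * B = B * mexp (t • B) := ((Commute.refl B).smul_left t).exp_left.eq
  rw [hderiv, hcomm]
  exact Matrix.mul_nonsing_inv_cancel_right _ _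
    ((isUnit_iff_isUnit_det _).mp (Matrix.isUnit_exp _))

lemma DistI_mexp_le {B : Mat d} (hB : B ∈ Dev d) :
    DistI Rdev (mexp B) ≤ ENNReal.ofReal (Rdev B) := by
  have hP : ContDiff ℝ 1 fun t : ℝ => mexp (t • B) :=
    (AnalyticOnNhd.contDiff fun A _ => NormedSpace.exp_analytic (𝕂 := ℝ) A).comp
      (contDiff_id.smul contDiff_const)
  refine (DistI_le_of_path hP (by simp [mexp]) (by simp)).trans_eq ?_
  simp_rw [deriv_mexp_smul_mul_inv, Rext_of_mem_dev hB]
  simp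

lemma DissAss.DistD_recovery_le (hR : DissAss d Rdev c₄ c₅) (z : Mat d) {A : Mat d}
    (hA : A ∈ Dev d) {ε : ℝ} (hε : 0 < ε) (hz : ‖ε • z‖ < 1) :
    DistD Rdev (1 + ε • z) (1 + ε • (ε⁻¹ • (mexp (ε • A) * (1 + ε • z) - 1)))
      ≤ ENNReal.ofReal (ε * Rdev A) := by
  have hdet : IsUnit (1 + ε • z).det := isUnit_det_of_norm_sub_one_lt (by simpa using hz)
  rw [smul_inv_smul₀ hε.ne', add_sub_cancel, DistD,
    Matrix.mul_nonsing_inv_cancel_right _ _ hdet, ← hR.hom ε hε.le A hA]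
  exact DistI_mexp_le (smul_mem_dev hA ε)

lemma DissAss.limsup_recovery_le (hR : DissAss d Rdev c₄ c₅) (z : Mat d) {A : Mat d}
    (hA : A ∈ Dev d) (hε : ∀ n, 0 < ε n) (hε0 : Tendsto ε l (𝓝 0)) :
    limsup (fun n => ENNReal.ofReal ((ε n)⁻¹) * DistD Rdev (1 + ε n • z)
        (1 + ε n • ((ε n)⁻¹ • (mexp (ε n • A) * (1 + ε n • z) - 1)))) l
      ≤ ENNReal.ofReal (Rdev A) := by
  have hsmall : ∀ᶠ n in l, ‖ε n • z‖ < 1 := by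
    have h := (hε0.smul_const z).norm
    rw [zero_smul, norm_zero] at h
    exact h.eventually_lt_const one_pos
  refine limsup_le_of_le (by isBoundedDefault) (hsmall.mono fun n hn => ?_)
  calc ENNReal.ofReal (ε n)⁻¹ * DistD Rdev (1 + ε n • z)
        (1 + ε n • ((ε n)⁻¹ • (mexp (ε n • A) * (1 + ε n • z) - 1)))
      ≤ ENNReal.ofReal (ε n)⁻¹ * ENNReal.ofReal (ε n * Rdev A) :=
        mul_le_mul_right (hR.DistD_recovery_le z hA (hε n) hn) _
    _ = ENNReal.ofReal (Rdev A) := by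
        rw [← ENNReal.ofReal_mul (inv_pos.mpr (hε n)).le, inv_mul_cancel_left₀ (hε n).ne']

lemma tendsto_recovery (z zh : Mat d) (hε : ∀ n, 0 < ε n) (hε0 : Tendsto ε l (𝓝 0)) :
    Tendsto (fun n => (ε n)⁻¹ • (mexp (ε n • (zh - z)) * (1 + ε n • z) - 1)) l (𝓝 zh) := by
  -- these are difference quotients at `0` of `u ↦ exp(u (zh - z)) (1 + u z)`
  have hderiv : HasDerivAt (fun u : ℝ => mexp (u • (zh - z)) * (1 + u • z)) zh 0 := by
    refine ((hasDerivAt_exp_smul_const (zh - z) (0 : ℝ)).mul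
      (((hasDerivAt_id (0 : ℝ)).smul_const z).const_add 1)).congr_deriv ?_
    simp
  have hε' : Tendsto ε l (𝓝[≠] 0) :=
    tendsto_nhdsWithin_iff.2 ⟨hε0, Eventually.of_forall fun n => (hε n).ne'⟩
  refine ((hasDerivAt_iff_tendsto_slope.1 hderiv).comp hε').congr fun n => ?_
  simp [slope_def_module, mexp]

lemma DissAss.lintegral_enorm_le_of_lintegral_Rext_le {α : Type*} [MeasurableSpace α]
    {μ : Measure α} (hR : DissAss d Rdev c₄ c₅) {f : α → Mat d} {c : ℝ}
    (hcost : ∫⁻ x, Rext Rdev (f x) ∂μ ≤ ENNReal.ofReal c) :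
    ∫⁻ x, ‖f x‖ₑ ∂μ ≤ ENNReal.ofReal (c / c₄) := by
  have h : ENNReal.ofReal c₄ * ∫⁻ x, ‖f x‖ₑ ∂μ ≤ ENNReal.ofReal c := by
    rw [← lintegral_const_mul' _ _ ENNReal.ofReal_ne_top]
    exact (lintegral_mono fun x => hR.ofReal_mul_enorm_le_Rext (f x)).trans hcost
  rwa [ENNReal.ofReal_div_of_pos hR.c4pos, ENNReal.le_div_iff_mul_le
    (Or.inl (ENNReal.ofReal_pos.2 hR.c4pos).ne') (Or.inl ENNReal.ofReal_ne_top), mul_comm]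

lemma norm_sub_one_le_of_forall_le_half {P : ℝ → Mat d} (hP : ContDiff ℝ 1 P) (h0 : P 0 = 1)
    {δ : ℝ} (hδ : 0 ≤ δ)
    (hvel : ∫⁻ t in Icc (0 : ℝ) 1, ‖deriv P t * (P t)⁻¹‖ₑ ≤ ENNReal.ofReal δ)
    {s : ℝ} (hs : s ∈ Icc (0 : ℝ) 1) (hhalf : ∀ u ∈ Icc 0 s, ‖P u - 1‖ ≤ 1 / 2) :
    ‖P s - 1‖ ≤ (‖(1 : Mat d)‖ + 1) * δ := by
  have hftc := sub_eq_setIntegral_deriv hP hs.1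
  rw [h0] at hftc
  rw [hftc]
  refine norm_integral_le_of_norm_le_mul (by positivity) hδ ?_
    ((lintegral_mono_set (Icc_subset_Icc_right hs.2)).trans hvel)
  filter_upwards [ae_restrict_mem measurableSet_Icc] with u hu
  have hdet := isUnit_det_of_norm_sub_one_lt ((hhalf u hu).trans_lt (by norm_num))
  have hPu : ‖P u‖ ≤ ‖(1 : Mat d)‖ + 1 := by
    linarith [norm_le_norm_sub_add (P u) 1, hhalf u hu]
  calc ‖deriv P u‖ = ‖deriv P u * (P u)⁻¹ * P u‖ := by
        rw [Matrix.nonsing_inv_mul_cancel_right _ _ hdet]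
    _ ≤ ‖deriv P u * (P u)⁻¹‖ * (‖(1 : Mat d)‖ + 1) :=
        (norm_mul_le _ _).trans (by gcongr)
    _ = (‖(1 : Mat d)‖ + 1) * ‖deriv P u * (P u)⁻¹‖ := mul_comm _ _

-- Where `P` is singular, `P⁻¹ = 0` and the velocity vanishes, so a small velocity alone does not
-- keep `P` invertible: this has to be bootstrapped along `[0, 1]`.
lemma norm_sub_one_le_of_lintegral_le {P : ℝ → Mat d} (hP : ContDiff ℝ 1 P) (h0 : P 0 = 1)
    {δ : ℝ} (hδ : 0 ≤ δ) (hsmall : (‖(1 : Mat d)‖ + 1) * δ < 1 / 2)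
    (hvel : ∫⁻ t in Icc (0 : ℝ) 1, ‖deriv P t * (P t)⁻¹‖ₑ ≤ ENNReal.ofReal δ) :
    ∀ t ∈ Icc (0 : ℝ) 1, ‖P t - 1‖ ≤ (‖(1 : Mat d)‖ + 1) * δ :=
  le_on_Icc_of_bootstrap (g := fun t => ‖P t - 1‖)
    (hP.continuous.sub continuous_const).norm.continuousOn hsmall (by simp [h0])
    fun _ hs hhalf => norm_sub_one_le_of_forall_le_half hP h0 hδ hvel hs hhalf

lemma mem_dev_of_lintegral_Rext_ne_top {f : ℝ → Mat d} (hf : ContinuousOn f (Icc 0 1))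
    (hcost : ∫⁻ t in Icc (0 : ℝ) 1, Rext Rdev (f t) ≠ ⊤) :
    ∀ t ∈ Icc (0 : ℝ) 1, f t ∈ Dev d := by
  intro t ht
  by_contra hnd
  obtain ⟨U, hU, hUeq⟩ := continuousOn_iff'.1 hf _ isClosed_dev.isOpen_compl
  have hV : IsOpen (U ∩ Ioo 0 1) := hU.inter isOpen_Ioo
  have htU : t ∈ U ∩ Icc 0 1 := by
    rw [← hUeq]
    exact ⟨hnd, ht⟩
  have hcl : t ∈ closure (Ioo (0 : ℝ) 1) := by rwa [closure_Ioo zero_ne_one]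
  have hne : (U ∩ Ioo (0 : ℝ) 1).Nonempty := _root_.mem_closure_iff.1 hcl U hU htU.1
  -- the cost is infinite on the open set `U ∩ (0,1)`, which has positive measure
  have hle : ∫⁻ u in Icc (0 : ℝ) 1, (U ∩ Ioo 0 1).indicator (fun _ => ⊤) u
      ≤ ∫⁻ u in Icc (0 : ℝ) 1, Rext Rdev (f u) := by
    refine lintegral_mono fun u => ?_
    by_cases hu : u ∈ U ∩ Ioo 0 1
    · have hu' : u ∈ f ⁻¹' (Dev d)ᶜ ∩ Icc 0 1 := by
        rw [hUeq]
        exact ⟨hu.1, Ioo_subset_Icc_self hu.2⟩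
      rw [indicator_of_mem hu, Rext_of_notMem_dev hu'.1]
    · rw [indicator_of_notMem hu]
      exact zero_le
  rw [lintegral_indicator_const hV.measurableSet, Measure.restrict_apply hV.measurableSet,
    inter_eq_left.2 (inter_subset_right.trans Ioo_subset_Icc_self),
    ENNReal.top_mul (hV.measure_pos volume hne).ne'] at hle
  exact hcost (top_le_iff.1 hle)

lemma DissAss.integral_mem_dev_and_le (hR : DissAss d Rdev c₄ c₅) {f : ℝ → Mat d}
    (hf : ContinuousOn f (Icc 0 1)) (hdev : ∀ t ∈ Icc (0 : ℝ) 1, f t ∈ Dev d) {c : ℝ}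
    (hc : 0 ≤ c) (hcost : ∫⁻ t in Icc (0 : ℝ) 1, Rext Rdev (f t) ≤ ENNReal.ofReal c) :
    (∫ t in Icc (0 : ℝ) 1, f t) ∈ Dev d ∧ Rdev (∫ t in Icc (0 : ℝ) 1, f t) ≤ c := by
  have : IsProbabilityMeasure (volume.restrict (Icc (0 : ℝ) 1)) := ⟨by simp⟩
  have hdev' : ∀ᵐ t ∂volume.restrict (Icc (0 : ℝ) 1), f t ∈ Dev d :=
    ae_restrict_of_forall_mem measurableSet_Icc hdev
  have hfi : Integrable f (volume.restrict (Icc 0 1)) := hf.integrableOn_Icc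
  have hRfi : Integrable (Rdev ∘ f) (volume.restrict (Icc 0 1)) :=
    (hR.continuousOn.comp hf hdev).integrableOn_Icc
  refine ⟨Convex.integral_mem hR.convexOn.1 isClosed_dev hdev' hfi,
    (hR.convexOn.map_integral_le hR.continuousOn isClosed_dev hdev' hfi hRfi).trans ?_⟩
  rw [← ENNReal.ofReal_le_ofReal_iff hc, ← Function.comp_def,
    ofReal_integral_eq_lintegral_ofReal hRfi (hdev'.mono fun t ht => hR.nonneg _ ht)]
  refine le_of_eq_of_le ?_ hcost
  exact setLIntegral_congr_fun measurableSet_Icc fun t ht => (Rext_of_mem_dev (hdev t ht)).symm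

lemma DissAss.exists_dev_near_of_lintegral_Rext_le (hR : DissAss d Rdev c₄ c₅)
    {P : ℝ → Mat d} (hP : ContDiff ℝ 1 P) (h0 : P 0 = 1) {c : ℝ} (hc : 0 ≤ c)
    (hsmall : (‖(1 : Mat d)‖ + 1) * (c / c₄) < 1 / 2)
    (hcost : ∫⁻ t in Icc (0 : ℝ) 1, Rext Rdev (deriv P t * (P t)⁻¹) ≤ ENNReal.ofReal c) :
    ∃ ζ ∈ Dev d, Rdev ζ ≤ c ∧ ‖P 1 - 1 - ζ‖ ≤ (‖(1 : Mat d)‖ + 1) * (c / c₄) ^ 2 := by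
  have hδ : 0 ≤ c / c₄ := div_nonneg hc hR.c4pos.le
  have hvel := hR.lintegral_enorm_le_of_lintegral_Rext_le hcost
  have hclose := norm_sub_one_le_of_lintegral_le hP h0 hδ hsmall hvel
  have hdet : ∀ t ∈ Icc (0 : ℝ) 1, IsUnit (P t).det := fun t ht =>
    isUnit_det_of_norm_sub_one_lt ((hclose t ht).trans_lt (by linarith))
  have hf : ContinuousOn (fun t => deriv P t * (P t)⁻¹) (Icc 0 1) :=
    (hP.continuous_deriv le_rfl).continuousOn.mul fun t ht =>
      ((continuousAt_inv_of_isUnit_det (hdet t ht)).comp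
        hP.continuous.continuousAt).continuousWithinAt
  have hdev := mem_dev_of_lintegral_Rext_ne_top hf (hcost.trans_lt ENNReal.ofReal_lt_top).ne
  obtain ⟨hζ, hRζ⟩ := hR.integral_mem_dev_and_le hf hdev hc hcost
  refine ⟨_, hζ, hRζ, ?_⟩
  -- `P 1 - 1 - ζ = ∫ Ṗ P⁻¹ (P - 1)`, and `P - 1` is uniformly of size `(‖1‖ + 1) (c / c₄)`
  have hftc := sub_eq_setIntegral_deriv hP zero_le_one
  rw [h0] at hftc
  rw [hftc, ← integral_sub ((hP.continuous_deriv le_rfl).continuousOn.integrableOn_Icc)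
    hf.integrableOn_Icc, sq, ← mul_assoc]
  refine norm_integral_le_of_norm_le_mul (by positivity) hδ ?_ hvel
  filter_upwards [ae_restrict_mem measurableSet_Icc] with t ht
  calc ‖deriv P t - deriv P t * (P t)⁻¹‖ = ‖deriv P t * (P t)⁻¹ * (P t - 1)‖ := by
        rw [mul_sub, mul_one, Matrix.nonsing_inv_mul_cancel_right _ _ (hdet t ht)]
    _ ≤ ‖deriv P t * (P t)⁻¹‖ * ((‖(1 : Mat d)‖ + 1) * (c / c₄)) :=
        (norm_mul_le _ _).trans (by gcongr; exact hclose t ht)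
    _ = (‖(1 : Mat d)‖ + 1) * (c / c₄) * ‖deriv P t * (P t)⁻¹‖ := mul_comm _ _

lemma DissAss.exists_dev_near_of_DistI_lt (hR : DissAss d Rdev c₄ c₅) {Phat : Mat d} {c : ℝ}
    (hc : 0 ≤ c) (hsmall : (‖(1 : Mat d)‖ + 1) * (c / c₄) < 1 / 2)
    (hD : DistI Rdev Phat < ENNReal.ofReal c) :
    ∃ ζ ∈ Dev d, Rdev ζ ≤ c ∧ ‖Phat - 1 - ζ‖ ≤ (‖(1 : Mat d)‖ + 1) * (c / c₄) ^ 2 := by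
  obtain ⟨P, hP, h0, h1, hcost⟩ := exists_path_of_DistI_lt hD
  exact h1 ▸ hR.exists_dev_near_of_lintegral_Rext_le hP h0 hc hsmall hcost.le

lemma tendsto_smul_inv_mul_inv_sub_one {zs zsh : ι → Mat d} {z zh : Mat d}
    (hε : ∀ n, 0 < ε n) (hε0 : Tendsto ε l (𝓝 0)) (hzs : Tendsto zs l (𝓝 z))
    (hzsh : Tendsto zsh l (𝓝 zh)) :
    Tendsto (fun n => (ε n)⁻¹ • ((1 + ε n • zsh n) * (1 + ε n • zs n)⁻¹ - 1)) l
      (𝓝 (zh - z)) := by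
  have hsmall : Tendsto (fun n => ε n • zs n) l (𝓝 0) := by simpa using hε0.smul hzs
  have hone : Tendsto (fun n => 1 + ε n • zs n) l (𝓝 1) := by
    simpa using (tendsto_const_nhds (x := (1 : Mat d))).add hsmall
  have hinv : Tendsto (fun n => (1 + ε n • zs n)⁻¹) l (𝓝 1) := by
    simpa [Function.comp_def] using
      (continuousAt_inv_of_isUnit_det (A := 1) (by simp)).tendsto.comp hone
  have hdet : ∀ᶠ n in l, IsUnit (1 + ε n • zs n).det := by
    have h := hsmall.norm
    rw [norm_zero] at h
    filter_upwards [h.eventually_lt_const one_pos] with n hn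
    exact isUnit_det_of_norm_sub_one_lt (by simpa using hn)
  refine (by simpa using (hzsh.sub hzs).mul hinv :
    Tendsto (fun n => (zsh n - zs n) * (1 + ε n • zs n)⁻¹) l (𝓝 (zh - z))).congr' ?_
  filter_upwards [hdet] with n hn
  have hsub : (1 + ε n • zsh n) * (1 + ε n • zs n)⁻¹ - 1
      = ((1 + ε n • zsh n) - (1 + ε n • zs n)) * (1 + ε n • zs n)⁻¹ := by
    rw [sub_mul, Matrix.mul_nonsing_inv _ hn]
  rw [eq_inv_smul_iff₀ (hε n).ne', hsub, add_sub_add_left_eq_sub, ← smul_sub, smul_mul_assoc]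

lemma DissAss.Rdev_le_of_eventually_DistD_lt (hR : DissAss d Rdev c₄ c₅) [l.NeBot]
    {zs zsh : ι → Mat d} {z zh : Mat d} (hε : ∀ n, 0 < ε n) (hε0 : Tendsto ε l (𝓝 0))
    (hzs : Tendsto zs l (𝓝 z)) (hzsh : Tendsto zsh l (𝓝 zh)) {B : ℝ} (hB : 0 ≤ B)
    (hD : ∀ᶠ n in l,
      DistD Rdev (1 + ε n • zs n) (1 + ε n • zsh n) < ENNReal.ofReal (ε n * B)) :
    zh - z ∈ Dev d ∧ Rdev (zh - z) ≤ B := by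
  set κ := ‖(1 : Mat d)‖ + 1
  have hsmall : ∀ᶠ n in l, κ * (ε n * B / c₄) < 1 / 2 := by
    have h : Tendsto (fun n => κ * (ε n * B / c₄)) l (𝓝 0) := by
      simpa using ((hε0.mul_const B).div_const c₄).const_mul κ
    exact h.eventually_lt_const one_half_pos
  have hex : ∀ᶠ n in l, ∃ ζ, ζ ∈ Dev d ∧ Rdev ζ ≤ ε n * B ∧
      ‖(1 + ε n • zsh n) * (1 + ε n • zs n)⁻¹ - 1 - ζ‖ ≤ κ * (ε n * B / c₄) ^ 2 := by
    filter_upwards [hD, hsmall] with n hn hs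
    obtain ⟨ζ, h⟩ := hR.exists_dev_near_of_DistI_lt (mul_nonneg (hε n).le hB) hs hn
    exact ⟨ζ, h⟩
  obtain ⟨ζ, hζ⟩ := hex.choice
  have hw : Tendsto (fun n => (ε n)⁻¹ • ζ n) l (𝓝 (zh - z)) := by
    refine (tendsto_smul_inv_mul_inv_sub_one hε hε0 hzs hzsh).congr_dist
      (squeeze_zero' (Eventually.of_forall fun n => dist_nonneg) (hζ.mono fun n hn => ?_)
        (by simpa using hε0.const_mul (κ * (B / c₄) ^ 2)))
    rw [dist_smul₀, dist_eq_norm, Real.norm_of_nonneg (inv_nonneg.2 (hε n).le)]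
    calc (ε n)⁻¹ * ‖(1 + ε n • zsh n) * (1 + ε n • zs n)⁻¹ - 1 - ζ n‖
        ≤ (ε n)⁻¹ * (κ * (ε n * B / c₄) ^ 2) :=
          mul_le_mul_of_nonneg_left hn.2.2 (inv_nonneg.2 (hε n).le)
      _ = κ * (B / c₄) ^ 2 * ε n := by field_simp
  have hwdev : ∀ᶠ n in l, (ε n)⁻¹ • ζ n ∈ Dev d := hζ.mono fun n hn => smul_mem_dev hn.1 _
  have hdev : zh - z ∈ Dev d := isClosed_dev.mem_of_tendsto hw hwdev
  refine ⟨hdev, le_of_tendsto ((hR.continuousOn _ hdev).tendsto.comp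
    (tendsto_nhdsWithin_iff.2 ⟨hw, hwdev⟩)) (hζ.mono fun n hn => ?_)⟩
  rw [Function.comp_apply, hR.hom _ (inv_nonneg.2 (hε n).le) _ hn.1]
  calc (ε n)⁻¹ * Rdev (ζ n) ≤ (ε n)⁻¹ * (ε n * B) :=
        mul_le_mul_of_nonneg_left hn.2.1 (inv_nonneg.2 (hε n).le)
    _ = B := inv_mul_cancel_left₀ (hε n).ne' B

lemma DissAss.Rext_le_liminf (hR : DissAss d Rdev c₄ c₅) {zs zsh : ι → Mat d}
    {z zh : Mat d} (hε : ∀ n, 0 < ε n) (hε0 : Tendsto ε l (𝓝 0)) (hzs : Tendsto zs l (𝓝 z))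
    (hzsh : Tendsto zsh l (𝓝 zh)) :
    Rext Rdev (zh - z) ≤ liminf (fun n => ENNReal.ofReal ((ε n)⁻¹) *
      DistD Rdev (1 + ε n • zs n) (1 + ε n • zsh n)) l := by
  refine le_of_forall_gt_imp_ge_of_dense fun b hb => ?_
  rcases eq_or_ne b ⊤ with rfl | hbtop
  · exact le_top
  have := frequently_iff_neBot.1 (frequently_lt_of_liminf_lt (by isBoundedDefault) hb)
  have hD : ∀ᶠ n in l ⊓ 𝓟 {n | ENNReal.ofReal ((ε n)⁻¹) *
      DistD Rdev (1 + ε n • zs n) (1 + ε n • zsh n) < b},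
      DistD Rdev (1 + ε n • zs n) (1 + ε n • zsh n) < ENNReal.ofReal (ε n * b.toReal) := by
    filter_upwards [mem_inf_of_right (mem_principal_self _)] with n hn
    have hε' : ENNReal.ofReal (ε n) * ENNReal.ofReal (ε n)⁻¹ = 1 := by
      rw [← ENNReal.ofReal_mul (hε n).le, mul_inv_cancel₀ (hε n).ne', ENNReal.ofReal_one]
    calc DistD Rdev (1 + ε n • zs n) (1 + ε n • zsh n)
        = ENNReal.ofReal (ε n) * (ENNReal.ofReal (ε n)⁻¹ *
          DistD Rdev (1 + ε n • zs n) (1 + ε n • zsh n)) := by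
          rw [← mul_assoc, hε', one_mul]
      _ < ENNReal.ofReal (ε n) * b :=
          ENNReal.mul_lt_mul_right (ENNReal.ofReal_pos.2 (hε n)).ne' ENNReal.ofReal_ne_top hn
      _ = ENNReal.ofReal (ε n * b.toReal) := by
          rw [ENNReal.ofReal_mul (hε n).le, ENNReal.ofReal_toReal hbtop]
  obtain ⟨hdev, hle⟩ := hR.Rdev_le_of_eventually_DistD_lt hε (hε0.mono_left inf_le_left)
    (hzs.mono_left inf_le_left) (hzsh.mono_left inf_le_left) ENNReal.toReal_nonneg hD
  rw [Rext_of_mem_dev hdev, ← ENNReal.ofReal_toReal hbtop]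
  exact ENNReal.ofReal_le_ofReal hle

end

/-- **Lemma 3.4 (recovery sequence and Γ-convergence of the rescaled dissipation
distances).** For deviatoric `z,ẑ`, the explicit sequence
`ẑ_ε = ε⁻¹(exp(ε(ẑ−z))(I+εz) − I)` satisfies `ẑ_ε → ẑ` and
`limsup_{ε→0} ε⁻¹ D(I+εz, I+εẑ_ε) ≤ R(ẑ−z)`; consequently `D_ε` Γ-converges to
`D₀(z,ẑ) = R(ẑ−z)` on `ℝ^{d×d} × ℝ^{d×d}`. -/
theorem dissipation_distance_recovery_and_Gamma_convergence
    {d : ℕ} (Rdev : Mat d → ℝ) (c₄ c₅ : ℝ) (hR : DissAss d Rdev c₄ c₅) :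
    -- the explicit recovery sequence
    (∀ z ∈ Dev d, ∀ zh ∈ Dev d, ∀ ε : ℕ → ℝ,
      (∀ n, 0 < ε n) → Tendsto ε atTop (𝓝 0) →
      Tendsto (fun n => (ε n)⁻¹ • (mexp (ε n • (zh - z)) * (1 + ε n • z) - 1)) atTop
        (𝓝 zh) ∧
      Filter.limsup (fun n => ENNReal.ofReal ((ε n)⁻¹) *
          DistD Rdev (1 + ε n • z)
            (1 + ε n • ((ε n)⁻¹ • (mexp (ε n • (zh - z)) * (1 + ε n • z) - 1)))) atTop
        ≤ ENNReal.ofReal (Rdev (zh - z))) ∧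
    -- Γ-convergence of `D_ε` to `D₀` on `ℝ^{d×d} × ℝ^{d×d}`
    (∀ z zh : Mat d, ∀ ε : ℕ → ℝ, (∀ n, 0 < ε n) → Tendsto ε atTop (𝓝 0) →
      -- Γ-liminf inequality along arbitrary converging sequences …
      (∀ zs zsh : ℕ → Mat d,
        Tendsto zs atTop (𝓝 z) → Tendsto zsh atTop (𝓝 zh) →
        Rext Rdev (zh - z) ≤
          Filter.liminf (fun n => ENNReal.ofReal ((ε n)⁻¹) *
            DistD Rdev (1 + ε n • zs n) (1 + ε n • zsh n)) atTop) ∧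
      -- … and existence of a recovery sequence
      (∃ zs zsh : ℕ → Mat d,
        Tendsto zs atTop (𝓝 z) ∧ Tendsto zsh atTop (𝓝 zh) ∧
        Filter.limsup (fun n => ENNReal.ofReal ((ε n)⁻¹) *
            DistD Rdev (1 + ε n • zs n) (1 + ε n • zsh n)) atTop
          ≤ Rext Rdev (zh - z))) := by
  refine ⟨fun z hz zh hzh ε hε hε0 =>
      ⟨tendsto_recovery z zh hε hε0, hR.limsup_recovery_le z (sub_mem_dev hzh hz) hε hε0⟩,
    fun z zh ε hε hε0 => ⟨fun zs zsh hzs hzsh => hR.Rext_le_liminf hε hε0 hzs hzsh, ?_⟩⟩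
  by_cases hdev : zh - z ∈ Dev d
  · refine ⟨fun _ => z, _, tendsto_const_nhds, tendsto_recovery z zh hε hε0, ?_⟩
    rw [Rext_of_mem_dev hdev]
    exact hR.limsup_recovery_le z hdev hε hε0
  · refine ⟨fun _ => z, fun _ => zh, tendsto_const_nhds, tendsto_const_nhds, ?_⟩
    rw [Rext_of_notMem_dev hdev]
    exact le_top

end LinPlast
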